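/- For f(w1,w2) = w1^2 w2^4 and the standard 2D Gaussian density φ, the zeta function ζ(z) = ∫∫ (w1^2 w2^4)^z φ(w1,w2) dw1 dw2 equals (2^{3z}/π)·Γ(z+1/2)·Γ(2z+1/2) for all real z > -1/4. -/
import Mathlib


open Real MeasureTheory

lemma aux_abs_rpow_gauss {s : ℝ} (hs : -1 < s) :
    ∫ x : ℝ, |x| ^ s * Real.exp (-x ^ 2 / 2)
      = 2 ^ ((s + 1) / 2) * Real.Gamma ((s + 1) / 2) := by
  have key : ∀ x : ℝ, |x| ^ s * Real.exp (-x ^ 2 / 2)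
      = (fun t : ℝ => t ^ s * Real.exp (-(1/2) * t ^ 2)) |x| := by
    intro x
    simp only [sq_abs]
    congr 2
    ring
  simp_rw [key]
  rw [_root_.integral_comp_abs (f := fun t : ℝ => t ^ s * Real.exp (-(1/2) * t ^ 2))]
  have h1 : ∫ x in Set.Ioi (0:ℝ), x ^ s * Real.exp (-(1/2) * x ^ 2)
      = ∫ x in Set.Ioi (0:ℝ), x ^ s * Real.exp (-(1/2) * x ^ (2:ℝ)) := by
    refine setIntegral_congr_fun measurableSet_Ioi (fun x hx => ?_)
    rw [Real.rpow_two]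
  rw [h1, integral_rpow_mul_exp_neg_mul_rpow (by norm_num) hs (by norm_num)]
  have h12 : (1/2 : ℝ) ^ (-(s + 1) / 2) = 2 ^ ((s + 1) / 2) := by
    rw [neg_div, Real.rpow_neg (by norm_num), one_div, Real.inv_rpow (by norm_num), inv_inv]
  rw [h12]
  ring

lemma aux_sq_rpow (x : ℝ) (z : ℝ) : (x ^ 2) ^ z = |x| ^ (2 * z) := by
  rw [← sq_abs, ← Real.rpow_natCast |x| 2, ← Real.rpow_mul (abs_nonneg x)]
  norm_num

lemma aux_quart_rpow (x : ℝ) (z : ℝ) : (x ^ 4) ^ z = |x| ^ (4 * z) := by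
  have h : x ^ 4 = |x| ^ 4 := by
    rw [← abs_pow, abs_of_nonneg (by positivity)]
  rw [h, ← Real.rpow_natCast |x| 4, ← Real.rpow_mul (abs_nonneg x)]
  norm_num

/-- For `f(w1,w2) = w1^2 * w2^4` and the standard 2D Gaussian density,
`ζ(z) = ∫∫ (w1^2 w2^4)^z φ dw = (2^(3z)/π) Γ(z+1/2) Γ(2z+1/2)` for real `z > -1/4`. -/
theorem zeta_w1sq_w2quart (z : ℝ) (hz : z > -(1/4)) :
    (∫ w1 : ℝ, ∫ w2 : ℝ,
        (w1 ^ 2 * w2 ^ 4) ^ z * (1 / (2 * π) * Real.exp (-(w1 ^ 2 + w2 ^ 2) / 2)))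
      = (2 : ℝ) ^ (3 * z) / π * Real.Gamma (z + 1 / 2) * Real.Gamma (2 * z + 1 / 2) := by
  have hs2 : (-1 : ℝ) < 2 * z := by linarith
  have hs4 : (-1 : ℝ) < 4 * z := by linarith
  have hA2 := aux_abs_rpow_gauss hs2
  have hA4 := aux_abs_rpow_gauss hs4
  have inner : ∀ w1 : ℝ,
      (∫ w2 : ℝ, (w1 ^ 2 * w2 ^ 4) ^ z * (1 / (2 * π) * Real.exp (-(w1 ^ 2 + w2 ^ 2) / 2)))
        = (|w1| ^ (2 * z) * Real.exp (-w1 ^ 2 / 2)) *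
            (1 / (2 * π) * (2 ^ (2 * z + 1 / 2) * Real.Gamma (2 * z + 1 / 2))) := by
    intro w1
    have step : ∀ w2 : ℝ,
        (w1 ^ 2 * w2 ^ 4) ^ z * (1 / (2 * π) * Real.exp (-(w1 ^ 2 + w2 ^ 2) / 2))
          = (|w1| ^ (2 * z) * Real.exp (-w1 ^ 2 / 2) * (1 / (2 * π))) *
              (|w2| ^ (4 * z) * Real.exp (-w2 ^ 2 / 2)) := by
      intro w2
      rw [Real.mul_rpow (by positivity) (by positivity), aux_sq_rpow, aux_quart_rpow]
      rw [show Real.exp (-(w1 ^ 2 + w2 ^ 2) / 2)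
            = Real.exp (-w1 ^ 2 / 2) * Real.exp (-w2 ^ 2 / 2) by
        rw [← Real.exp_add]; congr 1; ring]
      ring
    simp_rw [step]
    rw [MeasureTheory.integral_const_mul, hA4]
    have : (4 * z + 1) / 2 = 2 * z + 1 / 2 := by ring
    rw [this]
    ring
  simp_rw [inner]
  rw [MeasureTheory.integral_mul_const, hA2]
  have : (2 * z + 1) / 2 = z + 1 / 2 := by ring
  rw [this]
  have h2 : (2:ℝ) ^ (2 * z + 1 / 2) * 2 ^ (z + 1 / 2) = 2 * 2 ^ (3 * z) := by
    rw [← Real.rpow_add (by norm_num), show 2 * z + 1 / 2 + (z + 1 / 2) = 3 * z + 1 by ring,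
      Real.rpow_add (by norm_num), Real.rpow_one]
    ring
  linear_combination (Real.Gamma (z + 1 / 2) * Real.Gamma (2 * z + 1 / 2) / (2 * π)) * h2
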